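/- There is no pair of quadruples of affine (degree ≤ 1) polynomials φ₁, φ₂, χ₁, χ₂ on [0,1] satisfying simultaneously: φ₁(0)=1, φ₂(0)=0, χ₁(1)=1, χ₂(1)=0, ∫₀¹ χ₁ φ₁' dt − φ₁(1) = −1, ∫₀¹ χ₁ φ₂' dt − φ₂(1) = 0, ∫₀¹ χ₂ φ₁' dt = −1, ∫₀¹ χ₂ φ₂' dt = 1, ∫₀¹ χ₁ φ₁ dt = 1 − 1/(2α), ∫₀¹ χ₁ φ₂ dt = 1/(2α), ∫₀¹ χ₂ φ₁ dt = α, ∫₀¹ χ₂ φ₂ dt = 0, for any α ≠ 0. -/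

import Mathlib

/-
With affine trial and test functions the consistency conditions force χ₁ ≡ 1, and then
the remaining conditions determine q₂ = 1/α, s₂ = -2α and q₁ s₂ = 2.  Substituting these
into ∫ χ₂ φ₁ = α, which reads -s₂/2 - q₁ s₂/6 = α, leaves α - 1/3 = α.
-/

lemma deriv_affine (p q : ℝ) : deriv (fun t : ℝ => p + q * t) = fun _ => q := by
  funext t
  exact (((hasDerivAt_id t).const_mul q).const_add p).deriv.trans (mul_one q)

lemma integral_affine_mul_affine_unitInterval (r s p q : ℝ) :
    ∫ t in (0:ℝ)..1, (r + s * t) * (p + q * t) = r * p + (r * q + s * p) / 2 + s * q / 3 := by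
  have hF : ∀ t : ℝ, HasDerivAt
      (fun t => r * p * t + (r * q + s * p) * t ^ 2 / 2 + s * q * t ^ 3 / 3)
      ((r + s * t) * (p + q * t)) t := by
    intro t
    refine ((((hasDerivAt_id t).const_mul (r * p)).add
      (((hasDerivAt_pow 2 t).const_mul (r * q + s * p)).div_const 2)).add
      (((hasDerivAt_pow 3 t).const_mul (s * q)).div_const 3)).congr_deriv ?_
    norm_num
    ring
  rw [intervalIntegral.integral_eq_sub_of_hasDerivAt (fun t _ => hF t)
    ((by fun_prop : Continuous fun t : ℝ => (r + s * t) * (p + q * t)).intervalIntegrable _ _)]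
  ring

lemma integral_affine_unitInterval (r s : ℝ) :
    ∫ t in (0:ℝ)..1, r + s * t = r + s / 2 := by
  simpa using integral_affine_mul_affine_unitInterval r s 1 0

theorem two_stage_RK_no_affine_solution :
    ¬ ∃ (α p₁ q₁ p₂ q₂ r₁ s₁ r₂ s₂ : ℝ), α ≠ 0 ∧
      (let φ₁ : ℝ → ℝ := fun t => p₁ + q₁ * t
       let φ₂ : ℝ → ℝ := fun t => p₂ + q₂ * t
       let χ₁ : ℝ → ℝ := fun t => r₁ + s₁ * t
       let χ₂ : ℝ → ℝ := fun t => r₂ + s₂ * t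
       φ₁ 0 = 1 ∧ φ₂ 0 = 0 ∧ χ₁ 1 = 1 ∧ χ₂ 1 = 0 ∧
       (∫ t in (0:ℝ)..1, χ₁ t * deriv φ₁ t) - φ₁ 1 = -1 ∧
       (∫ t in (0:ℝ)..1, χ₁ t * deriv φ₂ t) - φ₂ 1 = 0 ∧
       (∫ t in (0:ℝ)..1, χ₂ t * deriv φ₁ t) = -1 ∧
       (∫ t in (0:ℝ)..1, χ₂ t * deriv φ₂ t) = 1 ∧
       (∫ t in (0:ℝ)..1, χ₁ t * φ₁ t) = 1 - 1 / (2 * α) ∧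
       (∫ t in (0:ℝ)..1, χ₁ t * φ₂ t) = 1 / (2 * α) ∧
       (∫ t in (0:ℝ)..1, χ₂ t * φ₁ t) = α ∧
       (∫ t in (0:ℝ)..1, χ₂ t * φ₂ t) = 0) := by
  rintro ⟨α, p₁, q₁, p₂, q₂, r₁, s₁, r₂, s₂, hα, hφ₁, hφ₂, hχ₁, hχ₂,
    hK₁₁, -, hK₂₁, hK₂₂, -, hM₁₂, hM₂₁, -⟩
  simp only [deriv_affine, intervalIntegral.integral_mul_const, integral_affine_unitInterval,
    integral_affine_mul_affine_unitInterval, mul_zero, add_zero, mul_one] at *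
  have hr₂ : r₂ = -s₂ := by linarith
  subst hφ₁ hφ₂ hr₂
  have hs₂q₁ : s₂ * q₁ = 2 := by linear_combination -2 * hK₂₁
  have hs₂q₂ : s₂ * q₂ = -2 := by linear_combination -2 * hK₂₂
  have hs₁ : s₁ = 0 := by
    have hq₁ : q₁ ≠ 0 := right_ne_zero_of_mul (hs₂q₁.trans_ne two_ne_zero)
    have : s₁ * q₁ = 0 := by linear_combination -2 * hK₁₁ + 2 * q₁ * hχ₁
    exact (mul_eq_zero.mp this).resolve_right hq₁
  have hr₁ : r₁ = 1 := by linarith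
  subst hs₁ hr₁
  have hq₂ : q₂ * α = 1 := by
    field_simp at hM₁₂
    linarith
  have hs₂ : s₂ = -2 * α := by linear_combination α * hs₂q₂ - s₂ * hq₂
  have : (1 : ℝ) / 3 = 0 := by linear_combination -hM₂₁ - hs₂ / 2 - hs₂q₁ / 6
  norm_num at this
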